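/- Let Γ ⊆ ℕ^{n+1} be a subsemigroup which generates ℤ^{n+1} as a group, and suppose the Okounkov body Δ(Γ) is bounded. Then Δ(Γ) is equal to the topological closure of the union ⋃_{k ≥ 1} Δ_k(Γ). -/

import Mathlib

open Set

/-- The image of a vector of natural numbers in Euclidean space. -/
noncomputable def toR (n : ℕ) (α : Fin (n + 1) → ℕ) : EuclideanSpace ℝ (Fin (n + 1)) :=
  WithLp.toLp 2 (fun i => (α i : ℝ))

/-- The smallest closed convex cone containing a set `S` in `ℝ^{n+1}`. -/
def closedConvexCone (n : ℕ) (S : Set (EuclideanSpace ℝ (Fin (n + 1)))) :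
    Set (EuclideanSpace ℝ (Fin (n + 1))) :=
  ⋂₀ {C | S ⊆ C ∧ IsClosed C ∧ Convex ℝ C ∧ ∀ c : ℝ, 0 ≤ c → ∀ x ∈ C, c • x ∈ C}

/-- The vector `(α, t) ∈ ℝ^{n+1}` obtained from `α ∈ ℝ^n` by appending `t`. -/
noncomputable def embSnoc (n : ℕ) (α : EuclideanSpace ℝ (Fin n)) (t : ℝ) :
    EuclideanSpace ℝ (Fin (n + 1)) :=
  WithLp.toLp 2 (Fin.snoc (show Fin n → ℝ from α) t)

/-- The Okounkov body `Δ(Γ) := {α ∈ ℝ^n : (α,1) ∈ Σ(Γ)}` of a semigroup `Γ ⊆ ℕ^{n+1}`. -/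
def OkounkovBody (n : ℕ) (Γ : Set (Fin (n + 1) → ℕ)) : Set (EuclideanSpace ℝ (Fin n)) :=
  {α | embSnoc n α 1 ∈ closedConvexCone n (toR n '' Γ)}

/-- `Δ_k(Γ) := {α ∈ ℝ^n : (kα, k) ∈ Γ}`. -/
def DeltaK (n : ℕ) (Γ : Set (Fin (n + 1) → ℕ)) (k : ℕ) : Set (EuclideanSpace ℝ (Fin n)) :=
  {α | ∃ a ∈ Γ, toR n a = embSnoc n ((k : ℝ) • α) (k : ℝ)}

/-
The inclusion `⊇` holds because each `Δ_k(Γ)` lies in the closed set `Δ(Γ)`. For `⊆`, let `K` be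
the closure of `⋃_{k ≥ 1} Δ_k(Γ)`. Adding multiples of elements of `Γ` shows that this union is
closed under convex combinations with weights `p / N`, so `K` is convex, and it is compact because
`Δ(Γ)` is bounded. Hence the cone `{t • (β, 1) : t ≥ 0, β ∈ K}` is a closed convex cone. Given
`α ∈ Δ(Γ)`, it contains every `a = (a', k) ∈ Γ`: if `k ≠ 0` then `a = k • (a' / k, 1)` with
`a' / k ∈ Δ_k(Γ)`; if `k = 0` then `a' = 0`, for otherwise the ray `α + t • a'` (`t ≥ 0`) would
lie in the bounded set `Δ(Γ)`, and `0` lies in the cone because `K ≠ ∅` (otherwise `Σ(Γ)` would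
lie in the hyperplane of height zero). So the cone contains `Σ(Γ)`, and `(α, 1) ∈ Σ(Γ)` forces
`α ∈ K`.
-/

theorem AddSubsemigroup.nsmul_mem {M : Type*} [AddMonoid M] (S : AddSubsemigroup M) {a : M}
    (ha : a ∈ S) {p : ℕ} (hp : p ≠ 0) : p • a ∈ S := by
  obtain ⟨q, rfl⟩ := Nat.exists_eq_add_one_of_ne_zero hp
  induction q with
  | zero => simpa using ha
  | succ q ih => rw [succ_nsmul]; exact S.add_mem (ih q.succ_ne_zero) ha

theorem AddSubsemigroup.nsmul_add_nsmul_mem {M : Type*} [AddMonoid M] (S : AddSubsemigroup M)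
    {a b : M} (ha : a ∈ S) (hb : b ∈ S) {p q : ℕ} (hpq : p + q ≠ 0) : p • a + q • b ∈ S := by
  rcases eq_or_ne p 0 with rfl | hp
  · simpa using S.nsmul_mem hb (by omega)
  rcases eq_or_ne q 0 with rfl | hq
  · simpa using S.nsmul_mem ha hp
  exact S.add_mem (S.nsmul_mem ha hp) (S.nsmul_mem hb hq)

theorem mem_closure_setOf_natCast_div {a : ℝ} (ha₀ : 0 ≤ a) (ha₁ : a ≤ 1) :
    a ∈ closure {c : ℝ | ∃ p N : ℕ, N ≠ 0 ∧ p ≤ N ∧ c = p / N} := by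
  refine mem_closure_of_tendsto
    ((tendsto_nat_floor_mul_div_atTop ha₀).comp tendsto_natCast_atTop_atTop) ?_
  filter_upwards [Filter.eventually_ne_atTop 0] with N hN
  refine ⟨⌊a * N⌋₊, N, hN, Nat.floor_le_of_le ?_, rfl⟩
  exact mul_le_of_le_one_left N.cast_nonneg ha₁

theorem convex_closure_of_natCast_div_combo_mem {E : Type*} [AddCommGroup E] [Module ℝ E]
    [TopologicalSpace E] [ContinuousAdd E] [ContinuousSMul ℝ E] {s : Set E}
    (h : ∀ x ∈ s, ∀ y ∈ s, ∀ p N : ℕ, N ≠ 0 → p ≤ N →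
      ((p : ℝ) / N) • x + (1 - (p : ℝ) / N) • y ∈ s) :
    Convex ℝ (closure s) := by
  rw [convex_iff_forall_pos]
  intro x hx y hy a b ha hb hab
  obtain rfl : b = 1 - a := by linarith
  have hcombo : ∀ c ∈ {c : ℝ | ∃ p N : ℕ, N ≠ 0 ∧ p ≤ N ∧ c = p / N},
      c • x + (1 - c) • y ∈ closure s := by
    rintro _ ⟨p, N, hN, hpN, rfl⟩
    exact map_mem_closure₂ (f := fun x y => ((p : ℝ) / N) • x + (1 - (p : ℝ) / N) • y)
      (by fun_prop) hx hy fun x hx y hy => h x hx y hy p N hN hpN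
  simpa using map_mem_closure (by fun_prop) (mem_closure_setOf_natCast_div ha.le (by linarith))
    hcombo

theorem eq_zero_of_isBounded_of_forall_add_smul_mem {E : Type*} [NormedAddCommGroup E]
    [NormedSpace ℝ E] {s : Set E} (hs : Bornology.IsBounded s) {x v : E}
    (hray : ∀ t : ℝ, 0 ≤ t → x + t • v ∈ s) : v = 0 := by
  by_contra hv
  obtain ⟨R, hR⟩ := hs.exists_norm_le
  have hv' : 0 < ‖v‖ := norm_pos_iff.2 hv
  set t := (R + ‖x‖ + 1) / ‖v‖
  have ht : 0 ≤ t := by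
    have := (norm_nonneg _).trans (hR _ (hray 0 le_rfl))
    positivity
  have htv : ‖t • v‖ = R + ‖x‖ + 1 := by
    rw [norm_smul, Real.norm_of_nonneg ht, div_mul_cancel₀ _ hv'.ne']
  have := norm_sub_le (x + t • v) x
  rw [add_sub_cancel_left, htv] at this
  linarith [hR _ (hray t ht)]

section

variable {n : ℕ}

@[simp]
theorem embSnoc_castSucc (α : EuclideanSpace ℝ (Fin n)) (t : ℝ) (i : Fin n) :
    embSnoc n α t i.castSucc = α i := by
  simp [embSnoc]

@[simp]
theorem embSnoc_last (α : EuclideanSpace ℝ (Fin n)) (t : ℝ) : embSnoc n α t (Fin.last n) = t := by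
  simp [embSnoc]

theorem embSnoc_ext {x y : EuclideanSpace ℝ (Fin (n + 1))}
    (h : ∀ i : Fin n, x i.castSucc = y i.castSucc) (hlast : x (Fin.last n) = y (Fin.last n)) :
    x = y := by
  ext i
  induction i using Fin.lastCases with
  | last => exact hlast
  | cast i => exact h i

theorem embSnoc_add (α β : EuclideanSpace ℝ (Fin n)) (s t : ℝ) :
    embSnoc n α s + embSnoc n β t = embSnoc n (α + β) (s + t) :=
  embSnoc_ext (by simp) (by simp)

theorem smul_embSnoc (c : ℝ) (α : EuclideanSpace ℝ (Fin n)) (t : ℝ) :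
    c • embSnoc n α t = embSnoc n (c • α) (c * t) :=
  embSnoc_ext (by simp) (by simp)

@[simp]
theorem embSnoc_zero : embSnoc n 0 0 = 0 :=
  embSnoc_ext (by simp) (by simp)

theorem embSnoc_inj {α β : EuclideanSpace ℝ (Fin n)} {s t : ℝ} :
    embSnoc n α s = embSnoc n β t ↔ α = β ∧ s = t := by
  refine ⟨fun h => ⟨?_, by simpa using congr($h (Fin.last n))⟩, fun h => h.1 ▸ h.2 ▸ rfl⟩
  ext i
  simpa using congr($h i.castSucc)

@[fun_prop]
theorem continuous_embSnoc (t : ℝ) :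
    Continuous fun α : EuclideanSpace ℝ (Fin n) => embSnoc n α t := by
  unfold embSnoc
  fun_prop

noncomputable def initR (a : Fin (n + 1) → ℕ) : EuclideanSpace ℝ (Fin n) :=
  WithLp.toLp 2 fun i => (a i.castSucc : ℝ)

theorem toR_eq_embSnoc (a : Fin (n + 1) → ℕ) : toR n a = embSnoc n (initR a) (a (Fin.last n)) :=
  embSnoc_ext (by simp [toR, initR]) (by simp [toR])

@[simp]
theorem toR_add (a b : Fin (n + 1) → ℕ) : toR n (a + b) = toR n a + toR n b := by
  ext i; simp [toR]

@[simp]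
theorem toR_nsmul (p : ℕ) (a : Fin (n + 1) → ℕ) : toR n (p • a) = (p : ℝ) • toR n a := by
  ext i; simp [toR]

section closedConvexCone

variable {S : Set (EuclideanSpace ℝ (Fin (n + 1)))}

theorem subset_closedConvexCone : S ⊆ closedConvexCone n S :=
  fun _ hx _ hC => hC.1 hx

theorem isClosed_closedConvexCone : IsClosed (closedConvexCone n S) :=
  isClosed_sInter fun _ hC => hC.2.1

theorem smul_mem_closedConvexCone {c : ℝ} (hc : 0 ≤ c) {x} (hx : x ∈ closedConvexCone n S) :
    c • x ∈ closedConvexCone n S :=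
  fun C hC => hC.2.2.2 c hc x (hx C hC)

theorem add_mem_closedConvexCone {x y} (hx : x ∈ closedConvexCone n S)
    (hy : y ∈ closedConvexCone n S) : x + y ∈ closedConvexCone n S := by
  intro C hC
  have hmid := hC.2.2.1 (hx C hC) (hy C hC) (by norm_num : (0 : ℝ) ≤ 1 / 2)
    (by norm_num : (0 : ℝ) ≤ 1 / 2) (by norm_num)
  convert hC.2.2.2 2 zero_le_two _ hmid using 1
  module

theorem closedConvexCone_subset {C : Set (EuclideanSpace ℝ (Fin (n + 1)))} (hSC : S ⊆ C)
    (hC : IsClosed C) (hconv : Convex ℝ C) (hsmul : ∀ c : ℝ, 0 ≤ c → ∀ x ∈ C, c • x ∈ C) :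
    closedConvexCone n S ⊆ C :=
  sInter_subset_of_mem ⟨hSC, hC, hconv, hsmul⟩

end closedConvexCone

variable {Γ : Set (Fin (n + 1) → ℕ)}

theorem isClosed_okounkovBody : IsClosed (OkounkovBody n Γ) :=
  isClosed_closedConvexCone.preimage (continuous_embSnoc 1)

theorem deltaK_subset_okounkovBody {k : ℕ} (hk : k ≠ 0) : DeltaK n Γ k ⊆ OkounkovBody n Γ := by
  rintro α ⟨a, ha, hak⟩
  have hkα := smul_mem_closedConvexCone (inv_nonneg.2 k.cast_nonneg)
    (subset_closedConvexCone (S := toR n '' Γ) ⟨a, ha, rfl⟩)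
  have hk' : (k : ℝ) ≠ 0 := by exact_mod_cast hk
  rwa [hak, smul_embSnoc, inv_smul_smul₀ hk', inv_mul_cancel₀ hk'] at hkα

theorem inv_smul_initR_mem_deltaK {a : Fin (n + 1) → ℕ} (ha : a ∈ Γ)
    (hlast : a (Fin.last n) ≠ 0) :
    (a (Fin.last n) : ℝ)⁻¹ • initR a ∈ DeltaK n Γ (a (Fin.last n)) :=
  ⟨a, ha, by rw [smul_inv_smul₀ (by exact_mod_cast hlast), toR_eq_embSnoc]⟩

theorem natCast_div_combo_mem_deltaK {Γ : AddSubsemigroup (Fin (n + 1) → ℕ)} {k m p N : ℕ}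
    (hk : k ≠ 0) (hm : m ≠ 0) (hN : N ≠ 0) (hpN : p ≤ N) {x y : EuclideanSpace ℝ (Fin n)}
    (hx : x ∈ DeltaK n Γ k) (hy : y ∈ DeltaK n Γ m) :
    ((p : ℝ) / N) • x + (1 - (p : ℝ) / N) • y ∈ DeltaK n Γ (N * k * m) := by
  obtain ⟨a, ha, hax⟩ := hx
  obtain ⟨b, hb, hby⟩ := hy
  refine ⟨(p * m) • a + ((N - p) * k) • b, Γ.nsmul_add_nsmul_mem ha hb ?_, ?_⟩
  · rcases p with _ | p <;> simp [*]
  · have hN' : (N : ℝ) ≠ 0 := by exact_mod_cast hN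
    rw [toR_add, toR_nsmul, toR_nsmul, hax, hby, smul_embSnoc, smul_embSnoc, embSnoc_add]
    push_cast [Nat.cast_sub hpN]
    congr 1
    · match_scalars <;> field_simp
    · ring

def DeltaUnion (n : ℕ) (Γ : Set (Fin (n + 1) → ℕ)) : Set (EuclideanSpace ℝ (Fin n)) :=
  ⋃ k ∈ {k : ℕ | 1 ≤ k}, DeltaK n Γ k

theorem mem_deltaUnion {α : EuclideanSpace ℝ (Fin n)} :
    α ∈ DeltaUnion n Γ ↔ ∃ k ≠ 0, α ∈ DeltaK n Γ k := by
  simp [DeltaUnion, Nat.one_le_iff_ne_zero]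

theorem deltaUnion_subset_okounkovBody : DeltaUnion n Γ ⊆ OkounkovBody n Γ := fun _ hα =>
  have ⟨_, hk, hαk⟩ := mem_deltaUnion.1 hα
  deltaK_subset_okounkovBody hk hαk

theorem convex_closure_deltaUnion (Γ : AddSubsemigroup (Fin (n + 1) → ℕ)) :
    Convex ℝ (closure (DeltaUnion n Γ)) := by
  refine convex_closure_of_natCast_div_combo_mem fun x hx y hy p N hN hpN => ?_
  obtain ⟨k, hk, hxk⟩ := mem_deltaUnion.1 hx
  obtain ⟨m, hm, hym⟩ := mem_deltaUnion.1 hy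
  exact mem_deltaUnion.2
    ⟨N * k * m, by positivity, natCast_div_combo_mem_deltaK hk hm hN hpN hxk hym⟩

theorem toR_eq_zero_of_last_eq_zero (hbdd : Bornology.IsBounded (OkounkovBody n Γ))
    {α : EuclideanSpace ℝ (Fin n)} (hα : α ∈ OkounkovBody n Γ) {a : Fin (n + 1) → ℕ}
    (ha : a ∈ Γ) (hlast : a (Fin.last n) = 0) : toR n a = 0 := by
  have hray : ∀ t : ℝ, 0 ≤ t → α + t • initR a ∈ OkounkovBody n Γ := by
    intro t ht
    have := add_mem_closedConvexCone hα (smul_mem_closedConvexCone ht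
      (subset_closedConvexCone (S := toR n '' Γ) ⟨a, ha, rfl⟩))
    rwa [toR_eq_embSnoc, hlast, smul_embSnoc, embSnoc_add, Nat.cast_zero, mul_zero, add_zero]
      at this
  rw [toR_eq_embSnoc, hlast, eq_zero_of_isBounded_of_forall_add_smul_mem hbdd hray, Nat.cast_zero,
    embSnoc_zero]

theorem exists_last_ne_zero_of_mem_okounkovBody {α : EuclideanSpace ℝ (Fin n)}
    (hα : α ∈ OkounkovBody n Γ) : ∃ a ∈ Γ, a (Fin.last n) ≠ 0 := by
  by_contra! hlast
  have hsub : closedConvexCone n (toR n '' Γ) ⊆ {x | x (Fin.last n) = 0} := by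
    refine closedConvexCone_subset ?_ (isClosed_eq (by fun_prop) continuous_const)
      (convex_hyperplane ?_ 0) (fun c _ x hx => by simp_all)
    · rintro _ ⟨a, ha, rfl⟩
      simp [toR, hlast a ha]
    · exact (EuclideanSpace.proj (Fin.last n) : EuclideanSpace ℝ (Fin (n + 1)) →L[ℝ] ℝ).isLinear
  simpa using hsub hα

def coneOver (K : Set (EuclideanSpace ℝ (Fin n))) : Set (EuclideanSpace ℝ (Fin (n + 1))) :=
  {x | ∃ t : ℝ, 0 ≤ t ∧ ∃ β ∈ K, x = t • embSnoc n β 1}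

section coneOver

variable {K : Set (EuclideanSpace ℝ (Fin n))}

theorem embSnoc_one_mem_coneOver_iff {α : EuclideanSpace ℝ (Fin n)} :
    embSnoc n α 1 ∈ coneOver K ↔ α ∈ K := by
  refine ⟨fun ⟨t, _, β, hβ, hαβ⟩ => ?_, fun hα => ⟨1, zero_le_one, α, hα, (one_smul _ _).symm⟩⟩
  rw [smul_embSnoc, mul_one, embSnoc_inj] at hαβ
  rwa [hαβ.1, ← hαβ.2, one_smul]

theorem smul_mem_coneOver {c : ℝ} (hc : 0 ≤ c) {x} (hx : x ∈ coneOver K) : c • x ∈ coneOver K := by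
  obtain ⟨t, ht, β, hβ, rfl⟩ := hx
  exact ⟨c * t, mul_nonneg hc ht, β, hβ, smul_smul c t _⟩

theorem convex_coneOver (hK : Convex ℝ K) : Convex ℝ (coneOver K) := by
  rintro _ ⟨s, hs, β, hβ, rfl⟩ _ ⟨t, ht, γ, hγ, rfl⟩ a b ha hb hab
  rcases (by positivity : 0 ≤ a * s + b * t).eq_or_lt with hsum | hsum
  · have has : a * s = 0 := by nlinarith [mul_nonneg ha hs, mul_nonneg hb ht]
    have hbt : b * t = 0 := by linarith
    exact ⟨0, le_rfl, β, hβ, by simp [smul_smul, has, hbt]⟩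
  refine ⟨a * s + b * t, hsum.le, _,
    convex_iff_div.1 hK hβ hγ (by positivity) (by positivity) hsum, ?_⟩
  simp only [smul_embSnoc, embSnoc_add, mul_one]
  congr 1
  match_scalars <;> field_simp

theorem isClosed_coneOver (hK : IsCompact K) : IsClosed (coneOver K) := by
  have := isCompact_iff_compactSpace.1 hK
  have hZ : IsClosed ({p : EuclideanSpace ℝ (Fin (n + 1)) × K | 0 ≤ p.1 (Fin.last n)} ∩
      {p | p.1 = p.1 (Fin.last n) • embSnoc n p.2 1}) :=
    (isClosed_le continuous_const (by fun_prop)).inter (isClosed_eq continuous_fst (by fun_prop))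
  convert isClosedMap_fst_of_compactSpace _ hZ
  ext x
  constructor
  · rintro ⟨t, ht, β, hβ, rfl⟩
    exact ⟨(_, ⟨β, hβ⟩), by simp [smul_embSnoc, ht], rfl⟩
  · rintro ⟨⟨x, β, hβ⟩, ⟨hx₀, hx⟩, rfl⟩
    exact ⟨_, hx₀, β, hβ, hx⟩

end coneOver

theorem toR_mem_coneOver_closure_deltaUnion (hbdd : Bornology.IsBounded (OkounkovBody n Γ))
    {α : EuclideanSpace ℝ (Fin n)} (hα : α ∈ OkounkovBody n Γ) {a : Fin (n + 1) → ℕ}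
    (ha : a ∈ Γ) : toR n a ∈ coneOver (closure (DeltaUnion n Γ)) := by
  have hslice : ∀ b ∈ Γ, b (Fin.last n) ≠ 0 →
      (b (Fin.last n) : ℝ)⁻¹ • initR b ∈ closure (DeltaUnion n Γ) := fun b hb hlast =>
    subset_closure (mem_deltaUnion.2 ⟨_, hlast, inv_smul_initR_mem_deltaK hb hlast⟩)
  by_cases hlast : a (Fin.last n) = 0
  · obtain ⟨g, hg, hglast⟩ := exists_last_ne_zero_of_mem_okounkovBody hα
    rw [toR_eq_zero_of_last_eq_zero hbdd hα ha hlast]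
    exact ⟨0, le_rfl, _, hslice g hg hglast, (zero_smul _ _).symm⟩
  · refine ⟨a (Fin.last n), Nat.cast_nonneg _, _, hslice a ha hlast, ?_⟩
    rw [smul_embSnoc, smul_inv_smul₀ (by exact_mod_cast hlast), mul_one, toR_eq_embSnoc]

theorem okounkovBody_subset_closure_deltaUnion (Γ : AddSubsemigroup (Fin (n + 1) → ℕ))
    (hbdd : Bornology.IsBounded (OkounkovBody n Γ)) :
    OkounkovBody n Γ ⊆ closure (DeltaUnion n Γ) := by
  intro α hα
  have hK : IsCompact (closure (DeltaUnion n Γ)) :=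
    (hbdd.subset deltaUnion_subset_okounkovBody).isCompact_closure
  have hcone : closedConvexCone n (toR n '' Γ) ⊆ coneOver (closure (DeltaUnion n Γ)) :=
    closedConvexCone_subset
      (image_subset_iff.2 fun _ ha => toR_mem_coneOver_closure_deltaUnion hbdd hα ha)
      (isClosed_coneOver hK) (convex_coneOver (convex_closure_deltaUnion Γ))
      fun _ hc _ hx => smul_mem_coneOver hc hx
  exact embSnoc_one_mem_coneOver_iff.1 (hcone hα)

end

theorem okounkovBody_eq_closure_iUnion_general (n : ℕ) (Γ : AddSubsemigroup (Fin (n + 1) → ℕ))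
    (hbdd : Bornology.IsBounded (OkounkovBody n (Γ : Set (Fin (n + 1) → ℕ)))) :
    OkounkovBody n (Γ : Set (Fin (n + 1) → ℕ)) =
      closure (⋃ k ∈ {k : ℕ | 1 ≤ k}, DeltaK n (Γ : Set (Fin (n + 1) → ℕ)) k) :=
  (okounkovBody_subset_closure_deltaUnion Γ hbdd).antisymm
    (closure_minimal deltaUnion_subset_okounkovBody isClosed_okounkovBody)

/-- If `Γ ⊆ ℕ^{n+1}` generates `ℤ^{n+1}` as a group and `Δ(Γ)` is bounded, then
`Δ(Γ)` equals the closure of `⋃_{k ≥ 1} Δ_k(Γ)`. -/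
theorem okounkovBody_eq_closure_iUnion (n : ℕ) (Γ : AddSubsemigroup (Fin (n + 1) → ℕ))
    (hgen : AddSubgroup.closure
      ((fun α : Fin (n + 1) → ℕ => fun i => (α i : ℤ)) '' (Γ : Set (Fin (n + 1) → ℕ))) = ⊤)
    (hbdd : Bornology.IsBounded (OkounkovBody n (Γ : Set (Fin (n + 1) → ℕ)))) :
    OkounkovBody n (Γ : Set (Fin (n + 1) → ℕ)) =
      closure (⋃ k ∈ {k : ℕ | 1 ≤ k}, DeltaK n (Γ : Set (Fin (n + 1) → ℕ)) k) :=
  okounkovBody_eq_closure_iUnion_general n Γ hbdd
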